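/- Let (y_i)_{0≤i≤n} be from Model (1), (z_i) the recursively defined process, and (ρ̄_n) random variables with |ρ̄_n − ρ*| = O_P(n^{−1/2}). Set w̄ = z − ρ̄_n Bz ∈ ℝⁿ and Δ̄ = (Δ̄_i)_{1≤i≤n} with Δ̄_i = Δ*_i + (ρ* − ρ̄_n)(z_{i−1} − y_{i−1}). Then sup_{t ∈ A_{n,m}} | J_n(Δ̄, t) − (2/n)( ⟨π_{E_{t*_n}}(w̄), π_{E_{t*_n}}(Δ̄)⟩ − ⟨π_{E_t}(w̄), π_{E_t}(Δ̄)⟩ ) | = O_P(n^{−1/2}). -/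

import Mathlib

open MeasureTheory ProbabilityTheory Filter
open scoped RealInnerProductSpace

noncomputable section

/-- `X n = O_P(a n)`: for every `ε > 0` there are `M > 0` and `N` such that
`P(|X n| > M * a n) ≤ ε` for all `n ≥ N`. -/
def IsBigOP {Ω : Type*} [MeasurableSpace Ω] (P : Measure Ω)
    (X : ℕ → Ω → ℝ) (a : ℕ → ℝ) : Prop :=
  ∀ ε : ℝ, 0 < ε → ∃ M : ℝ, 0 < M ∧ ∃ N : ℕ, ∀ n, N ≤ n →
    (P {ω | M * a n < |X n ω|}).toReal ≤ ε

/-- `A_{n,m}`: admissible change-point configurations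
`0 = t_0 < t_1 < ⋯ < t_m < t_{m+1} = n`. -/
def Anm (n m : ℕ) : Set (Fin (m + 2) → ℕ) :=
  {t | t 0 = 0 ∧ t (Fin.last (m + 1)) = n ∧ StrictMono t}

/-- the indicator vector of the `k`-th segment `(t_k, t_{k+1}]` (coordinates `1,…,n`). -/
def segVec (n m : ℕ) (t : Fin (m + 2) → ℕ) (k : Fin (m + 1)) :
    EuclideanSpace ℝ (Fin n) :=
  WithLp.toLp 2 (fun i => if t k.castSucc < (i : ℕ) + 1 ∧ (i : ℕ) + 1 ≤ t k.succ then 1 else 0)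

/-- the linear span `E_t` of the segment indicator vectors. -/
def Esp (n m : ℕ) (t : Fin (m + 2) → ℕ) : Submodule ℝ (EuclideanSpace ℝ (Fin n)) :=
  Submodule.span ℝ (Set.range (segVec n m t))

/-- orthogonal projection `π_{E_t}` of `ℝⁿ` onto `E_t`. -/
def projE (n m : ℕ) (t : Fin (m + 2) → ℕ) (x : EuclideanSpace ℝ (Fin n)) :
    EuclideanSpace ℝ (Fin n) :=
  (Submodule.orthogonalProjectionOnto (Esp n m t) x : EuclideanSpace ℝ (Fin n))

/-- `x = (x_1, …, x_n)`. -/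
def vecOf (n : ℕ) (x : ℕ → ℝ) : EuclideanSpace ℝ (Fin n) :=
  WithLp.toLp 2 (fun i => x ((i : ℕ) + 1))

/-- `Bx = (x_0, …, x_{n-1})`. -/
def bvecOf (n : ℕ) (x : ℕ → ℝ) : EuclideanSpace ℝ (Fin n) :=
  WithLp.toLp 2 (fun i => x (i : ℕ))

/-- the decorrelated vector `x - ρ Bx`. -/
def decor (n : ℕ) (x : ℕ → ℝ) (r : ℝ) : EuclideanSpace ℝ (Fin n) :=
  vecOf n x - r • bvecOf n x

/-- `J_n(x, t) = (1/n)(‖π_{E_{t*}} x‖² - ‖π_{E_t} x‖²)`. -/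
def Jn (n m : ℕ) (tstar t : Fin (m + 2) → ℕ) (x : EuclideanSpace ℝ (Fin n)) : ℝ :=
  (‖projE n m tstar x‖ ^ 2 - ‖projE n m t x‖ ^ 2) / n

/-- `K_n(x, t) = (1/n)‖(π_{E_{t*}} - π_{E_t}) 𝔼x‖²`. -/
def Kn (n m : ℕ) (tstar t : Fin (m + 2) → ℕ) (Ex : EuclideanSpace ℝ (Fin n)) : ℝ :=
  ‖projE n m tstar Ex - projE n m t Ex‖ ^ 2 / n

/-- `V_n(x, t)`. -/
def Vn (n m : ℕ) (tstar t : Fin (m + 2) → ℕ) (x Ex : EuclideanSpace ℝ (Fin n)) : ℝ :=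
  (‖projE n m tstar (x - Ex)‖ ^ 2 - ‖projE n m t (x - Ex)‖ ^ 2) / n

/-- `W_n(x, t)`. -/
def Wn (n m : ℕ) (tstar t : Fin (m + 2) → ℕ) (x Ex : EuclideanSpace ℝ (Fin n)) : ℝ :=
  2 * (⟪projE n m tstar (x - Ex), projE n m tstar Ex⟫ -
       ⟪projE n m t (x - Ex), projE n m t Ex⟫) / n

/-- `C'_{ν,γ,n,m}(I)`: admissible configurations `t` with
`ν λ̲⁻² ≤ ‖t - t*‖ ≤ n γ Δ_{τ*}`, `t_k ≥ t*_k` for all `k`,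
`ν λ̲⁻² ≤ t_k - t*_k ≤ n γ Δ_{τ*}` for `k ∈ I` and `t_k - t*_k < ν λ̲⁻²` for `k ∉ I`. -/
def CprimeI (n m : ℕ) (tstar : Fin (m + 2) → ℕ) (lamb Dtau ν γ : ℝ)
    (I : Set (Fin m)) : Set (Fin (m + 2) → ℕ) :=
  {t | t ∈ Anm n m ∧
    ν / lamb ^ 2 ≤
      Real.sqrt (∑ k : Fin m,
        ((t k.castSucc.succ : ℝ) - (tstar k.castSucc.succ : ℝ)) ^ 2) ∧
    Real.sqrt (∑ k : Fin m,
        ((t k.castSucc.succ : ℝ) - (tstar k.castSucc.succ : ℝ)) ^ 2) ≤ n * γ * Dtau ∧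
    (∀ k : Fin m, tstar k.castSucc.succ ≤ t k.castSucc.succ) ∧
    (∀ k : Fin m, k ∈ I →
      ν / lamb ^ 2 ≤ (t k.castSucc.succ : ℝ) - (tstar k.castSucc.succ : ℝ) ∧
      (t k.castSucc.succ : ℝ) - (tstar k.castSucc.succ : ℝ) ≤ n * γ * Dtau) ∧
    (∀ k : Fin m, k ∉ I →
      (t k.castSucc.succ : ℝ) - (tstar k.castSucc.succ : ℝ) < ν / lamb ^ 2)}


/-!
Orthogonal projections are contractions, so for every configuration `t` the quantity under the
supremum is at most `(2‖Δ̄‖² + 4‖w̄‖‖Δ̄‖) / n`. The vector `Δ̄` is `Δ*`, which has at most `m`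
nonzero bounded entries, plus `(ρ* - ρ̄ₙ)(z - y)`, where `z - y` is bounded because it solves a
stable linear recursion driven by `Δ*`; hence `‖Δ̄‖ = O_P(1)`. Since `z` stays within a bounded
distance of the AR(1) noise `η`, whose second moments are uniformly bounded by Minkowski's
inequality, Markov's inequality gives `‖w̄‖ = O_P(√n)`. The supremum is therefore
`O_P(1 / n + √n / n) = O_P(n^{-1/2})`.
-/

open scoped NNReal ENNReal
open Finset

namespace IsBigOP

variable {Ω : Type*} [MeasurableSpace Ω] {P : Measure Ω} [IsFiniteMeasure P]
  {X Y Z : ℕ → Ω → ℝ} {a b c : ℕ → ℝ}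

theorem of_bound₂ (hX : IsBigOP P X a) (hY : IsBigOP P Y b)
    (h : ∀ M₁ > 0, ∀ M₂ > 0, ∃ K > 0, ∀ n ω,
      |X n ω| ≤ M₁ * a n → |Y n ω| ≤ M₂ * b n → |Z n ω| ≤ K * c n) :
    IsBigOP P Z c := by
  intro ε hε
  obtain ⟨M₁, hM₁, N₁, hN₁⟩ := hX (ε / 2) (half_pos hε)
  obtain ⟨M₂, hM₂, N₂, hN₂⟩ := hY (ε / 2) (half_pos hε)
  obtain ⟨K, hK, hZ⟩ := h M₁ hM₁ M₂ hM₂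
  refine ⟨K, hK, max N₁ N₂, fun n hn => ?_⟩
  have hsub : {ω | K * c n < |Z n ω|} ⊆
      {ω | M₁ * a n < |X n ω|} ∪ {ω | M₂ * b n < |Y n ω|} := by
    intro ω hω
    by_contra hbad
    simp only [Set.mem_union, Set.mem_ofPred_eq, not_or, not_lt] at hbad hω
    exact (hZ n ω hbad.1 hbad.2).not_gt hω
  calc P.real {ω | K * c n < |Z n ω|}
      ≤ P.real {ω | M₁ * a n < |X n ω|} + P.real {ω | M₂ * b n < |Y n ω|} :=
        (measureReal_mono hsub).trans (measureReal_union_le _ _)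
    _ ≤ ε / 2 + ε / 2 :=
        add_le_add (hN₁ n (le_of_max_le_left hn)) (hN₂ n (le_of_max_le_right hn))
    _ = ε := add_halves ε

end IsBigOP

theorem abs_norm_sq_sub_two_inner_le {E : Type*} [NormedAddCommGroup E]
    [InnerProductSpace ℝ E] {f : E → E} (hf : ∀ v, ‖f v‖ ≤ ‖v‖) (x w : E) :
    |‖f x‖ ^ 2 - 2 * ⟪f w, f x⟫| ≤ ‖x‖ ^ 2 + 2 * (‖w‖ * ‖x‖) := by
  have hinner : |⟪f w, f x⟫| ≤ ‖w‖ * ‖x‖ :=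
    (abs_real_inner_le_norm _ _).trans
      (mul_le_mul (hf w) (hf x) (norm_nonneg _) (norm_nonneg _))
  have hsq : ‖f x‖ ^ 2 ≤ ‖x‖ ^ 2 := pow_le_pow_left₀ (norm_nonneg _) (hf x) 2
  rw [abs_le] at hinner ⊢
  constructor <;> nlinarith [sq_nonneg ‖f x‖]

theorem norm_projE_le (n m : ℕ) (t : Fin (m + 2) → ℕ) (x : EuclideanSpace ℝ (Fin n)) :
    ‖projE n m t x‖ ≤ ‖x‖ :=
  (Esp n m t).norm_orthogonalProjectionOnto_apply_le x

theorem abs_Jn_sub_two_div_mul_inner_le (n m : ℕ) (tstar t : Fin (m + 2) → ℕ)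
    (x w : EuclideanSpace ℝ (Fin n)) :
    |Jn n m tstar t x -
      2 / n * (⟪projE n m tstar w, projE n m tstar x⟫ - ⟪projE n m t w, projE n m t x⟫)| ≤
    (2 * ‖x‖ ^ 2 + 4 * ‖w‖ * ‖x‖) / n := by
  have hsplit : Jn n m tstar t x -
      2 / n * (⟪projE n m tstar w, projE n m tstar x⟫ - ⟪projE n m t w, projE n m t x⟫) =
      ((‖projE n m tstar x‖ ^ 2 - 2 * ⟪projE n m tstar w, projE n m tstar x⟫) -
        (‖projE n m t x‖ ^ 2 - 2 * ⟪projE n m t w, projE n m t x⟫)) / n := by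
    rw [Jn]; ring
  rw [hsplit, abs_div, Nat.abs_cast]
  gcongr
  refine (abs_sub _ _).trans ?_
  linarith [abs_norm_sq_sub_two_inner_le (norm_projE_le n m tstar) x w,
    abs_norm_sq_sub_two_inner_le (norm_projE_le n m t) x w]

theorem abs_biSup_abs_le {α : Type*} {g : α → ℝ} {S : Set α} {B : ℝ} (hB : 0 ≤ B)
    (h : ∀ t ∈ S, |g t| ≤ B) : |(⨆ t ∈ S, |g t|)| ≤ B := by
  rw [abs_of_nonneg (Real.iSup_nonneg fun t => Real.iSup_nonneg fun _ => abs_nonneg _)]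
  exact Real.iSup_le (fun t => Real.iSup_le (h t) hB) hB

theorem EuclideanSpace.norm_le_sqrt_mul_of_abs_le {ι : Type*} [Fintype ι]
    {v : EuclideanSpace ℝ ι} {s : Finset ι} {N : ℕ} {b : ℝ} (hb : 0 ≤ b) (hs : #s ≤ N)
    (hv : ∀ i ∉ s, v i = 0) (hvb : ∀ i, |v i| ≤ b) : ‖v‖ ≤ √N * b := by
  rw [EuclideanSpace.norm_eq, ← Real.sqrt_sq hb, ← Real.sqrt_mul (Nat.cast_nonneg N)]
  refine Real.sqrt_le_sqrt ?_
  calc ∑ i, ‖v i‖ ^ 2 = ∑ i ∈ s, ‖v i‖ ^ 2 :=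
        (sum_subset (subset_univ s) fun i _ hi => by simp [hv i hi]).symm
    _ ≤ ∑ _i ∈ s, b ^ 2 := sum_le_sum fun i _ => by
        rw [Real.norm_eq_abs]; exact pow_le_pow_left₀ (abs_nonneg _) (hvb i) 2
    _ ≤ N * b ^ 2 := by
        rw [sum_const, nsmul_eq_mul]
        gcongr

theorem abs_le_div_one_sub_of_rec {d u : ℕ → ℝ} {ρ A : ℝ} (hρ : |ρ| < 1)
    (hu : ∀ i, |u i| ≤ A) (h0 : d 0 = 0) (hrec : ∀ i, d (i + 1) = u (i + 1) + ρ * d i)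
    (i : ℕ) : |d i| ≤ A / (1 - |ρ|) := by
  have h1 : 0 < 1 - |ρ| := by linarith
  have hA : 0 ≤ A := (abs_nonneg _).trans (hu 0)
  induction i with
  | zero => rw [h0, abs_zero]; positivity
  | succ i ih =>
    rw [hrec, le_div_iff₀ h1]
    calc |u (i + 1) + ρ * d i| * (1 - |ρ|)
        ≤ (A + |ρ| * (A / (1 - |ρ|))) * (1 - |ρ|) := by
          gcongr
          refine (abs_add_le _ _).trans ?_
          rw [abs_mul]
          gcongr
          exact hu _
      _ = A := by field_simp; ring

theorem Fin.exists_castSucc_lt_and_le_succ {N n i : ℕ} {t : Fin (N + 1) → ℕ} (h0 : t 0 = 0)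
    (hlast : t (Fin.last N) = n) (hi : 0 < i) (hin : i ≤ n) :
    ∃ k : Fin N, t k.castSucc < i ∧ i ≤ t k.succ := by
  by_contra! h
  have hlt : ∀ k, t k < i := fun k => by
    induction k using Fin.induction with
    | zero => rwa [h0]
    | succ k ih => exact h k ih
  have := hlt (Fin.last N)
  omega

theorem abs_sub_le_sum_abs_of_piecewise {m n : ℕ} {t : Fin (m + 2) → ℕ} (h0 : t 0 = 0)
    (hlast : t (Fin.last (m + 1)) = n) {μ : Fin (m + 1) → ℝ} {y η : ℕ → ℝ}
    (hy0 : y 0 = μ 0 + η 0)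
    (hyseg : ∀ k : Fin (m + 1), ∀ i, t k.castSucc < i → i ≤ t k.succ → y i = μ k + η i)
    {i : ℕ} (hi : i ≤ n) : |y i - η i| ≤ ∑ k, |μ k| := by
  obtain ⟨k, hk⟩ : ∃ k, y i - η i = μ k := by
    rcases Nat.eq_zero_or_pos i with rfl | hpos
    · exact ⟨0, by rw [hy0]; ring⟩
    · obtain ⟨k, hk₁, hk₂⟩ := Fin.exists_castSucc_lt_and_le_succ h0 hlast hpos hi
      exact ⟨k, by rw [hyseg k i hk₁ hk₂]; ring⟩
  rw [hk]
  exact single_le_sum (f := fun k => |μ k|) (fun _ _ => abs_nonneg _) (mem_univ k)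

theorem abs_le_of_jumps {m : ℕ} {T : Fin m → ℕ} {Δ : ℕ → ℝ} {ρ : ℝ} {μ : Fin (m + 1) → ℝ}
    (hjump : ∀ k : Fin m, Δ (T k + 1) = -ρ * (μ k.succ - μ k.castSucc))
    (hzero : ∀ i, (∀ k, i ≠ T k + 1) → Δ i = 0) (i : ℕ) :
    |Δ i| ≤ |ρ| * ∑ k : Fin m, |μ k.succ - μ k.castSucc| := by
  by_cases h : ∃ k, i = T k + 1
  · obtain ⟨k, rfl⟩ := h
    rw [hjump, abs_mul, abs_neg]
    gcongr
    exact single_le_sum (f := fun k : Fin m => |μ k.succ - μ k.castSucc|)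
      (fun _ _ => abs_nonneg _) (mem_univ k)
  · rw [hzero i (by simpa using h), abs_zero]
    positivity

theorem norm_vecOf_add_mul_le {n m : ℕ} {T : Fin m → ℕ} {Δ d : ℕ → ℝ} {r A C M : ℝ}
    (hA : 0 ≤ A) (hC : 0 ≤ C) (hM : 0 ≤ M) (hzero : ∀ i, (∀ k, i ≠ T k + 1) → Δ i = 0)
    (hΔ : ∀ i, |Δ i| ≤ A) (hd : ∀ i, |d i| ≤ C) (hr : |r| ≤ M * (1 / √n)) :
    ‖vecOf n (fun i => Δ i + r * d (i - 1))‖ ≤ √m * A + M * C := by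
  have hsplit : vecOf n (fun i => Δ i + r * d (i - 1)) = vecOf n Δ + r • bvecOf n d := by
    ext i; simp [vecOf, bvecOf]
  rw [hsplit]
  refine (norm_add_le _ _).trans (add_le_add ?_ ?_)
  · refine EuclideanSpace.norm_le_sqrt_mul_of_abs_le hA
      (s := univ.filter fun i : Fin n => ∃ k, (i : ℕ) = T k) ?_ ?_ fun i => hΔ _
    · calc #(univ.filter fun i : Fin n => ∃ k, (i : ℕ) = T k) ≤ #(univ.image T) :=
            card_le_card_of_injOn Fin.val (fun i hi => by simpa [eq_comm] using hi)
              Fin.val_injective.injOn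
        _ ≤ m := card_image_le.trans (by simp)
    · intro i hi
      refine hzero _ fun k hk => ?_
      simp only [mem_filter, mem_univ, true_and, not_exists] at hi
      exact hi k (by omega)
  · have hdn : ‖bvecOf n d‖ ≤ √n * C := by
      simpa using EuclideanSpace.norm_le_sqrt_mul_of_abs_le hC (s := (univ : Finset (Fin n)))
        (N := n) (by simp) (by simp) fun i => hd _
    have hn : 1 / √(n : ℝ) * √n ≤ 1 := by rcases eq_or_ne √(n : ℝ) 0 with h | h <;> simp [h]
    calc ‖r • bvecOf n d‖ = |r| * ‖bvecOf n d‖ := by rw [norm_smul, Real.norm_eq_abs]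
      _ ≤ M * (1 / √n) * (√n * C) := mul_le_mul hr hdn (norm_nonneg _) (by positivity)
      _ = M * C * (1 / √n * √n) := by ring
      _ ≤ M * C := mul_le_of_le_one_right (by positivity) hn

theorem norm_vecOf_le (n : ℕ) (x : ℕ → ℝ) : ‖vecOf n x‖ ≤ √(∑ i ∈ range (n + 1), x i ^ 2) := by
  rw [EuclideanSpace.norm_eq]
  refine Real.sqrt_le_sqrt ?_
  simp only [vecOf, PiLp.toLp_apply, Real.norm_eq_abs, sq_abs]
  rw [Fin.sum_univ_eq_sum_range (fun i => x (i + 1) ^ 2) n, sum_range_succ' _ n]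
  linarith [sq_nonneg (x 0)]

theorem norm_bvecOf_le (n : ℕ) (x : ℕ → ℝ) : ‖bvecOf n x‖ ≤ √(∑ i ∈ range (n + 1), x i ^ 2) := by
  rw [EuclideanSpace.norm_eq]
  refine Real.sqrt_le_sqrt ?_
  simp only [bvecOf, PiLp.toLp_apply, Real.norm_eq_abs, sq_abs]
  rw [Fin.sum_univ_eq_sum_range (fun i => x i ^ 2) n, sum_range_succ _ n]
  linarith [sq_nonneg (x n)]

theorem norm_decor_le (n : ℕ) (x : ℕ → ℝ) (r : ℝ) :
    ‖decor n x r‖ ≤ (1 + |r|) * √(∑ i ∈ range (n + 1), x i ^ 2) :=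
  calc ‖decor n x r‖ ≤ ‖vecOf n x‖ + |r| * ‖bvecOf n x‖ := by
        rw [decor, ← Real.norm_eq_abs, ← norm_smul]; exact norm_sub_le _ _
    _ ≤ _ := by
        rw [add_mul, one_mul]
        gcongr
        exacts [norm_vecOf_le n x, norm_bvecOf_le n x]

theorem sum_range_sq_le_of_abs_sub_le {n : ℕ} {x u : ℕ → ℝ} {C : ℝ}
    (h : ∀ i ≤ n, |x i - u i| ≤ C) :
    ∑ i ∈ range (n + 1), x i ^ 2 ≤ 2 * ((n + 1) * C ^ 2) + 2 * ∑ i ∈ range (n + 1), u i ^ 2 := by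
  have hterm : ∀ i ∈ range (n + 1), x i ^ 2 ≤ 2 * C ^ 2 + 2 * u i ^ 2 := fun i hi => by
    have hC : (x i - u i) ^ 2 ≤ C ^ 2 := by
      rw [← sq_abs]
      exact pow_le_pow_left₀ (abs_nonneg _) (h i (Nat.lt_succ_iff.1 (mem_range.1 hi))) 2
    nlinarith [sq_nonneg (x i - 2 * u i)]
  refine (sum_le_sum hterm).trans_eq ?_
  rw [sum_add_distrib, sum_const, card_range, nsmul_eq_mul, ← mul_sum]
  push_cast
  ring

theorem one_div_sqrt_natCast_le_one (n : ℕ) : 1 / √(n : ℝ) ≤ 1 := by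
  rcases Nat.eq_zero_or_pos n with rfl | hn
  · simp
  · exact div_le_one_of_le₀ (Real.one_le_sqrt.2 (by exact_mod_cast hn)) (Real.sqrt_nonneg _)

theorem norm_decor_le_of_abs_sub_le {n : ℕ} {x u : ℕ → ℝ} {ρ r C M₁ M₂ : ℝ} (hρ : |ρ| ≤ 1)
    (hM₁ : 0 ≤ M₁) (hxu : ∀ i ≤ n, |x i - u i| ≤ C) (hr : |r - ρ| ≤ M₁ * (1 / √n))
    (hu : ∑ i ∈ range (n + 1), u i ^ 2 ≤ M₂ * (n + 1)) :
    ‖decor n x r‖ ≤ (2 + M₁) * √(2 * C ^ 2 + 2 * M₂) * √((n : ℝ) + 1) := by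
  have hr' : 1 + |r| ≤ 2 + M₁ := by
    have := abs_add_le ρ (r - ρ)
    rw [add_sub_cancel] at this
    nlinarith [mul_le_mul_of_nonneg_left (one_div_sqrt_natCast_le_one n) hM₁]
  have hx : ∑ i ∈ range (n + 1), x i ^ 2 ≤ (2 * C ^ 2 + 2 * M₂) * (n + 1) :=
    (sum_range_sq_le_of_abs_sub_le hxu).trans (by nlinarith)
  calc ‖decor n x r‖ ≤ (1 + |r|) * √(∑ i ∈ range (n + 1), x i ^ 2) := norm_decor_le n x r
    _ ≤ (2 + M₁) * √((2 * C ^ 2 + 2 * M₂) * (n + 1)) :=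
        mul_le_mul hr' (Real.sqrt_le_sqrt hx) (Real.sqrt_nonneg _) (by positivity)
    _ = _ := by rw [Real.sqrt_mul' _ (by positivity), mul_assoc]

theorem two_sq_add_four_mul_div_le {n : ℕ} {a b K₁ K₂ : ℝ} (ha : 0 ≤ a) (haK : a ≤ K₁)
    (hb : 0 ≤ b) (hbK : b ≤ K₂ * √(n + 1)) :
    (2 * a ^ 2 + 4 * b * a) / n ≤ (2 * K₁ ^ 2 + 8 * K₂ * K₁) * (1 / √n) := by
  rcases Nat.eq_zero_or_pos n with rfl | hn
  · simp
  have hn1 : (1 : ℝ) ≤ n := by exact_mod_cast hn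
  set s := √(n : ℝ)
  have hs1 : 1 ≤ s := Real.one_le_sqrt.2 hn1
  have hns : (n : ℝ) = s ^ 2 := (Real.sq_sqrt (Nat.cast_nonneg n)).symm
  have hsucc : √((n : ℝ) + 1) ≤ 2 * s := Real.sqrt_le_iff.2 ⟨by positivity, by nlinarith⟩
  have hK₂ : 0 ≤ K₂ := nonneg_of_mul_nonneg_left (hb.trans hbK) (by positivity)
  have hb2 : b ≤ 2 * K₂ * s := hbK.trans (by nlinarith)
  rw [hns, div_le_iff₀ (by positivity)]
  have hba : b * a ≤ 2 * K₂ * s * K₁ := mul_le_mul hb2 haK ha (by positivity)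
  have ha2 : a ^ 2 ≤ K₁ ^ 2 := pow_le_pow_left₀ ha haK 2
  have hK₁ : 0 ≤ K₁ := ha.trans haK
  field_simp
  nlinarith [mul_nonneg (mul_nonneg hK₁ hK₁) (sub_nonneg.2 hs1)]

section SecondMoments

variable {Ω : Type*} [MeasurableSpace Ω] {P : Measure Ω}

theorem eLpNorm_eq_ofReal_of_map_eq_gaussianReal {X : Ω → ℝ} (hX : AEMeasurable X P)
    {μ : ℝ} {v : ℝ≥0} (h : P.map X = gaussianReal μ v) {p : ℝ≥0∞} (hp : p ≠ ∞) :
    eLpNorm X p P = ENNReal.ofReal (eLpNorm id p (gaussianReal μ v)).toReal := by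
  rw [ENNReal.ofReal_toReal (memLp_id_gaussianReal' p hp).eLpNorm_lt_top.ne, ← h,
    eLpNorm_map_measure aestronglyMeasurable_id hX, Function.id_comp]

theorem eLpNorm_le_of_ar1 {p : ℝ≥0∞} (hp : 1 ≤ p) {η ε : ℕ → Ω → ℝ} {ρ c₀ c : ℝ}
    (hρ : |ρ| < 1) (hc₀ : 0 ≤ c₀) (hc : 0 ≤ c)
    (hη : ∀ i, AEStronglyMeasurable (η i) P) (hε : ∀ i, AEStronglyMeasurable (ε (i + 1)) P)
    (hrec : ∀ i ω, η (i + 1) ω = ρ * η i ω + ε (i + 1) ω)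
    (h₀ : eLpNorm (η 0) p P ≤ ENNReal.ofReal c₀)
    (hεc : ∀ i, eLpNorm (ε (i + 1)) p P ≤ ENNReal.ofReal c) (i : ℕ) :
    eLpNorm (η i) p P ≤ ENNReal.ofReal (c₀ + c / (1 - |ρ|)) := by
  have h1 : 0 < 1 - |ρ| := by linarith
  induction i with
  | zero => exact h₀.trans (ENNReal.ofReal_le_ofReal (le_add_of_nonneg_right (by positivity)))
  | succ i ih =>
    have hfun : η (i + 1) = ρ • η i + ε (i + 1) := funext (hrec i)
    calc eLpNorm (η (i + 1)) p P ≤ eLpNorm (ρ • η i) p P + eLpNorm (ε (i + 1)) p P := by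
          rw [hfun]; exact eLpNorm_add_le ((hη i).const_smul ρ) (hε i) hp
      _ = ‖ρ‖ₑ * eLpNorm (η i) p P + eLpNorm (ε (i + 1)) p P := by rw [eLpNorm_const_smul]
      _ ≤ ENNReal.ofReal |ρ| * ENNReal.ofReal (c₀ + c / (1 - |ρ|)) + ENNReal.ofReal c := by
          rw [Real.enorm_eq_ofReal_abs]
          gcongr
          exact hεc i
      _ = ENNReal.ofReal (|ρ| * (c₀ + c / (1 - |ρ|)) + c) := by
          rw [← ENNReal.ofReal_mul (abs_nonneg ρ), ← ENNReal.ofReal_add (by positivity) hc]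
      _ ≤ ENNReal.ofReal (c₀ + c / (1 - |ρ|)) := by
          refine ENNReal.ofReal_le_ofReal ?_
          have hgeom : |ρ| * (c / (1 - |ρ|)) + c = c / (1 - |ρ|) := by field_simp; ring
          nlinarith [mul_le_mul_of_nonneg_right hρ.le hc₀]

theorem lintegral_ofReal_sq_le {X : Ω → ℝ} {c : ℝ} (hc : 0 ≤ c)
    (h : eLpNorm X 2 P ≤ ENNReal.ofReal c) :
    ∫⁻ ω, ENNReal.ofReal (X ω ^ 2) ∂P ≤ ENNReal.ofReal (c ^ 2) := by
  have hpow := eLpNorm_nnreal_pow_eq_lintegral (f := X) (μ := P) (p := 2) two_ne_zero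
  simp only [ENNReal.coe_ofNat, NNReal.coe_ofNat, ENNReal.rpow_two] at hpow
  rw [ENNReal.ofReal_pow hc]
  calc ∫⁻ ω, ENNReal.ofReal (X ω ^ 2) ∂P = ∫⁻ ω, ‖X ω‖ₑ ^ 2 ∂P := by
        congr 1; funext ω
        rw [Real.enorm_eq_ofReal_abs, ← ENNReal.ofReal_pow (abs_nonneg _), sq_abs]
    _ = eLpNorm X 2 P ^ 2 := hpow.symm
    _ ≤ ENNReal.ofReal c ^ 2 := by gcongr

theorem isBigOP_sum_range_sq {η : ℕ → Ω → ℝ} (hη : ∀ i, AEMeasurable (η i) P) {c : ℝ}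
    (hc : 0 ≤ c) (h : ∀ i, eLpNorm (η i) 2 P ≤ ENNReal.ofReal c) :
    IsBigOP P (fun n ω => ∑ i ∈ range (n + 1), η i ω ^ 2) (fun n => n + 1) := by
  intro ε hε
  set M := c ^ 2 / ε + 1
  have hM : 0 < M := by positivity
  refine ⟨M, hM, 0, fun n _ => ?_⟩
  set S : Ω → ℝ := fun ω => ∑ i ∈ range (n + 1), η i ω ^ 2
  have hS : ∀ ω, 0 ≤ S ω := fun ω => sum_nonneg fun i _ => sq_nonneg _
  have hpos : 0 < M * (n + 1) := by positivity
  have hint : ∫⁻ ω, ENNReal.ofReal (S ω) ∂P ≤ ENNReal.ofReal ((n + 1) * c ^ 2) := by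
    simp only [S]
    simp_rw [ENNReal.ofReal_sum_of_nonneg fun i _ => sq_nonneg _]
    rw [lintegral_finsetSum' (f := fun i ω => ENNReal.ofReal (η i ω ^ 2)) _
      fun i _ => ENNReal.measurable_ofReal.comp_aemeasurable ((hη i).pow_const 2)]
    refine (sum_le_sum fun i _ => lintegral_ofReal_sq_le hc (h i)).trans_eq ?_
    rw [sum_const, card_range, nsmul_eq_mul, ENNReal.ofReal_mul (by positivity)]
    norm_cast
  have hmarkov := meas_ge_le_lintegral_div
    (ENNReal.measurable_ofReal.comp_aemeasurable
      (Finset.aemeasurable_fun_sum (range (n + 1)) fun i _ => (hη i).pow_const 2) :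
        AEMeasurable (fun ω => ENNReal.ofReal (S ω)) P)
    (ENNReal.ofReal_pos.2 hpos).ne' ENNReal.ofReal_ne_top
  refine ENNReal.toReal_le_of_le_ofReal hε.le ?_
  calc P {ω | M * (n + 1) < |S ω|}
      ≤ P {ω | ENNReal.ofReal (M * (n + 1)) ≤ ENNReal.ofReal (S ω)} :=
        measure_mono fun ω hω => ENNReal.ofReal_le_ofReal (by
          simp only [Set.mem_ofPred_eq, abs_of_nonneg (hS ω)] at hω; exact hω.le)
    _ ≤ ENNReal.ofReal ((n + 1) * c ^ 2) / ENNReal.ofReal (M * (n + 1)) :=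
        hmarkov.trans (ENNReal.div_le_div_right hint _)
    _ ≤ ENNReal.ofReal ε := by
        rw [← ENNReal.ofReal_div_of_pos hpos]
        refine ENNReal.ofReal_le_ofReal ?_
        rw [div_le_iff₀ hpos]
        have hcM : c ^ 2 ≤ ε * M := by
          simp only [M]; rw [mul_add, mul_div_cancel₀ _ hε.ne']; linarith
        nlinarith

theorem isBigOP_sum_range_sq_of_ar1 {η ε : ℕ → Ω → ℝ} {ρ μ₀ μ : ℝ} {v₀ v : ℝ≥0}
    (hρ : |ρ| < 1) (hη₀ : Measurable (η 0)) (hε : ∀ i, Measurable (ε i))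
    (hrec : ∀ i ω, η (i + 1) ω = ρ * η i ω + ε (i + 1) ω)
    (hη₀dist : P.map (η 0) = gaussianReal μ₀ v₀)
    (hεdist : ∀ i, 1 ≤ i → P.map (ε i) = gaussianReal μ v) :
    IsBigOP P (fun n ω => ∑ i ∈ range (n + 1), η i ω ^ 2) (fun n => n + 1) := by
  have hη : ∀ i, Measurable (η i) := fun i => by
    induction i with
    | zero => exact hη₀
    | succ i ih => rw [funext (hrec i)]; exact (ih.const_mul ρ).add (hε (i + 1))
  refine isBigOP_sum_range_sq (fun i => (hη i).aemeasurable) (by positivity)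
    (eLpNorm_le_of_ar1 one_le_two hρ ENNReal.toReal_nonneg ENNReal.toReal_nonneg
      (fun i => (hη i).aestronglyMeasurable) (fun i => (hε _).aestronglyMeasurable) hrec
      (eLpNorm_eq_ofReal_of_map_eq_gaussianReal (hη 0).aemeasurable hη₀dist
        ENNReal.ofNat_ne_top).le
      fun i => (eLpNorm_eq_ofReal_of_map_eq_gaussianReal (hε _).aemeasurable
        (hεdist (i + 1) (Nat.le_add_left 1 i)) ENNReal.ofNat_ne_top).le)

end SecondMoments

theorem stmt_16_general
    {Ω : Type*} [MeasurableSpace Ω] (P : Measure Ω) [IsProbabilityMeasure P]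
    (m : ℕ)
    (σ : ℝ)
    (ρ : ℝ) (hρ₁ : -1 < ρ) (hρ₂ : ρ < 1)
    (μ : Fin (m + 1) → ℝ)
    (τ : Fin (m + 2) → ℝ) (hτ0 : τ 0 = 0) (hτ1 : τ (Fin.last (m + 1)) = 1)
    (tstar : ℕ → Fin (m + 2) → ℕ)
    (htstardef : ∀ n k, tstar n k = ⌊(n : ℝ) * τ k⌋₊)
    (ε : ℕ → Ω → ℝ) (hεmeas : ∀ i, Measurable (ε i))
    (η : ℕ → Ω → ℝ) (hηmeas : Measurable (η 0))
    (hηrec : ∀ i : ℕ, ∀ ω, η (i + 1) ω = ρ * η i ω + ε (i + 1) ω)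
    (hεdist : ∀ i : ℕ, 1 ≤ i → P.map (ε i) = gaussianReal 0 (σ ^ 2).toNNReal)
    (hηdist : P.map (η 0) = gaussianReal 0 ((σ ^ 2) / (1 - ρ ^ 2)).toNNReal)
    (y : ℕ → ℕ → Ω → ℝ)
    (hy0 : ∀ n ω, y n 0 ω = μ 0 + η 0 ω)
    (hyseg : ∀ n, ∀ k : Fin (m + 1), ∀ i : ℕ,
      tstar n k.castSucc < i → i ≤ tstar n k.succ →
      ∀ ω, y n i ω = μ k + η i ω)
    (Δs : ℕ → ℕ → ℝ)
    (hΔ1 : ∀ n, ∀ k : Fin m, Δs n (tstar n k.castSucc.succ + 1) =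
      -ρ * (μ k.succ - μ k.castSucc))
    (hΔ2 : ∀ n i, (∀ k : Fin m, i ≠ tstar n k.castSucc.succ + 1) → Δs n i = 0)
    (z : ℕ → ℕ → Ω → ℝ)
    (hz0 : ∀ n ω, z n 0 ω = y n 0 ω)
    (hzrec : ∀ n, ∀ i : ℕ, ∀ ω, z n (i + 1) ω =
      ((y n (i + 1) ω - ρ * y n i ω) + Δs n (i + 1)) + ρ * z n i ω)
    (ρbar : ℕ → Ω → ℝ)
    (hρbar : IsBigOP P (fun n ω => ρbar n ω - ρ) (fun n => 1 / Real.sqrt n))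
 :
    IsBigOP P (fun n ω => ⨆ t ∈ Anm n m,
      |Jn n m (tstar n) t (vecOf n (fun i =>
        Δs n i + (ρ - ρbar n ω) * (z n (i - 1) ω - y n (i - 1) ω))) -
        2 / n * (⟪projE n m (tstar n) (decor n (fun i => z n i ω) (ρbar n ω)),
            projE n m (tstar n) (vecOf n (fun i =>
        Δs n i + (ρ - ρbar n ω) * (z n (i - 1) ω - y n (i - 1) ω)))⟫ -
          ⟪projE n m t (decor n (fun i => z n i ω) (ρbar n ω)),
            projE n m t (vecOf n (fun i =>
        Δs n i + (ρ - ρbar n ω) * (z n (i - 1) ω - y n (i - 1) ω)))⟫)|)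
      (fun n => 1 / Real.sqrt n) := by
  have hρ : |ρ| < 1 := abs_lt.2 ⟨hρ₁, hρ₂⟩
  obtain ⟨A, hA, hΔ⟩ : ∃ A, 0 ≤ A ∧ ∀ n i, |Δs n i| ≤ A :=
    ⟨_, by positivity, fun n => abs_le_of_jumps (hΔ1 n) (hΔ2 n)⟩
  obtain ⟨D, hD, hzy⟩ : ∃ D, 0 ≤ D ∧ ∀ n ω i, |z n i ω - y n i ω| ≤ D :=
    ⟨_, div_nonneg hA (by linarith), fun n ω => abs_le_div_one_sub_of_rec hρ (hΔ n)
      (by rw [hz0, sub_self]) fun i => by rw [hzrec]; ring⟩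
  obtain ⟨B, hzη⟩ : ∃ B, ∀ n ω, ∀ i ≤ n, |z n i ω - η i ω| ≤ B :=
    ⟨_, fun n ω i hi => (abs_sub_le _ (y n i ω) _).trans (add_le_add (hzy n ω i)
      (abs_sub_le_sum_abs_of_piecewise (by simp [htstardef, hτ0]) (by simp [htstardef, hτ1])
        (hy0 n ω) (fun k i h₁ h₂ => hyseg n k i h₁ h₂ ω) hi))⟩
  refine hρbar.of_bound₂ (isBigOP_sum_range_sq_of_ar1 hρ hηmeas hεmeas hηrec hηdist hεdist)
    fun M₁ hM₁ M₂ hM₂ => ?_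
  set K₁ := √m * A + M₁ * D + 1
  set K₂ := (2 + M₁) * √(2 * B ^ 2 + 2 * M₂)
  refine ⟨2 * K₁ ^ 2 + 8 * K₂ * K₁, by positivity, fun n ω h₁ h₂ => ?_⟩
  have hΔbar := norm_vecOf_add_mul_le hA hD hM₁.le (hΔ2 n) (hΔ n) (hzy n ω)
    (by rwa [abs_sub_comm] : |ρ - ρbar n ω| ≤ M₁ * (1 / √n))
  have hwbar := norm_decor_le_of_abs_sub_le hρ.le hM₁.le (hzη n ω) h₁
    ((le_abs_self _).trans h₂)
  exact abs_biSup_abs_le (by positivity) fun t _ =>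
    (abs_Jn_sub_two_div_mul_inner_le _ _ _ _ _ _).trans
      (two_sq_add_four_mul_div_le (norm_nonneg _) (hΔbar.trans (le_add_of_nonneg_right one_pos.le))
        (norm_nonneg _) hwbar)

theorem stmt_16
    {Ω : Type*} [MeasurableSpace Ω] (P : Measure Ω) [IsProbabilityMeasure P]
    (m : ℕ) (hm : 1 ≤ m)
    (σ : ℝ) (hσ : 0 < σ)
    (ρ : ℝ) (hρ₁ : -1 < ρ) (hρ₂ : ρ < 1)
    (μ : Fin (m + 1) → ℝ)
    (τ : Fin (m + 2) → ℝ) (hτ0 : τ 0 = 0) (hτ1 : τ (Fin.last (m + 1)) = 1)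
    (hτmono : StrictMono τ)
    (tstar : ℕ → Fin (m + 2) → ℕ)
    (htstardef : ∀ n k, tstar n k = ⌊(n : ℝ) * τ k⌋₊)
    (ε : ℕ → Ω → ℝ) (hεmeas : ∀ i, Measurable (ε i))
    (η : ℕ → Ω → ℝ) (hηmeas : Measurable (η 0))
    (hηrec : ∀ i : ℕ, ∀ ω, η (i + 1) ω = ρ * η i ω + ε (i + 1) ω)
    (hindep : iIndepFun
      (fun i : ℕ => if i = 0 then η 0 else ε i) P)
    (hεdist : ∀ i : ℕ, 1 ≤ i → P.map (ε i) = gaussianReal 0 (σ ^ 2).toNNReal)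
    (hηdist : P.map (η 0) = gaussianReal 0 ((σ ^ 2) / (1 - ρ ^ 2)).toNNReal)
    (y : ℕ → ℕ → Ω → ℝ)
    (hy0 : ∀ n ω, y n 0 ω = μ 0 + η 0 ω)
    (hyseg : ∀ n, ∀ k : Fin (m + 1), ∀ i : ℕ,
      tstar n k.castSucc < i → i ≤ tstar n k.succ →
      ∀ ω, y n i ω = μ k + η i ω)
    (Δs : ℕ → ℕ → ℝ)
    (hΔ1 : ∀ n, ∀ k : Fin m, Δs n (tstar n k.castSucc.succ + 1) =
      -ρ * (μ k.succ - μ k.castSucc))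
    (hΔ2 : ∀ n i, (∀ k : Fin m, i ≠ tstar n k.castSucc.succ + 1) → Δs n i = 0)
    (z : ℕ → ℕ → Ω → ℝ)
    (hz0 : ∀ n ω, z n 0 ω = y n 0 ω)
    (hzrec : ∀ n, ∀ i : ℕ, ∀ ω, z n (i + 1) ω =
      ((y n (i + 1) ω - ρ * y n i ω) + Δs n (i + 1)) + ρ * z n i ω)
    (ρbar : ℕ → Ω → ℝ) (hρbarmeas : ∀ n, Measurable (ρbar n))
    (hρbar : IsBigOP P (fun n ω => ρbar n ω - ρ) (fun n => 1 / Real.sqrt n))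
 :
    IsBigOP P (fun n ω => ⨆ t ∈ Anm n m,
      |Jn n m (tstar n) t (vecOf n (fun i =>
        Δs n i + (ρ - ρbar n ω) * (z n (i - 1) ω - y n (i - 1) ω))) -
        2 / n * (⟪projE n m (tstar n) (decor n (fun i => z n i ω) (ρbar n ω)),
            projE n m (tstar n) (vecOf n (fun i =>
        Δs n i + (ρ - ρbar n ω) * (z n (i - 1) ω - y n (i - 1) ω)))⟫ -
          ⟪projE n m t (decor n (fun i => z n i ω) (ρbar n ω)),
            projE n m t (vecOf n (fun i =>
        Δs n i + (ρ - ρbar n ω) * (z n (i - 1) ω - y n (i - 1) ω)))⟫)|)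
      (fun n => 1 / Real.sqrt n) :=
  stmt_16_general P m σ ρ hρ₁ hρ₂ μ τ hτ0 hτ1 tstar htstardef ε hεmeas η hηmeas hηrec hεdist hηdist
    y hy0 hyseg Δs hΔ1 hΔ2 z hz0 hzrec ρbar hρbar
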